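/- arXiv:2405.01860 — 2 statements merged into one kernel-verified Lean document; each statement's English description precedes it below -/
import Mathlib

section
/- If a metric space X is ℝ-convex (for all x,z ∈ X the metric segment [x,z] is isometric to the real interval [0, d_X(x,z)]), then for all points x,y,z ∈ X there exists a unique point u ∈ [x,y] ∩ [x,z] such that [x,y] ∩ [x,z] = [x,u]. -/
/-- The metric segment `[x,z] = {y : d(x,y) + d(y,z) = d(x,z)}`. -/
def MetricSegment {X : Type*} [MetricSpace X] (x z : X) : Set X :=
  {y | dist x y + dist y z = dist x z}

/-- A metric space is an ℝ-tree if every metric segment `[x,y]` is isometric to the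
real interval `[0, d(x,y)]`, and `[x,y] ∩ [y,z] = {y}` implies `d(x,z) = d(x,y) + d(y,z)`. -/
def IsRTree (X : Type*) [MetricSpace X] : Prop :=
  (∀ x y : X, Nonempty ((MetricSegment x y) ≃ᵢ (Set.Icc (0:ℝ) (dist x y)))) ∧
  (∀ x y z : X, MetricSegment x y ∩ MetricSegment y z = {y} →
    dist x z = dist x y + dist y z)

/-- A metric space `X` is injective if every 1-Lipschitz map into `X` from a subset of a
metric space extends to a 1-Lipschitz map on the whole space. -/
def IsInjectiveMetricSpace (X : Type*) [MetricSpace X] : Prop :=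
  ∀ (A : Type) [MetricSpace A] (B : Set A) (f : B → X), LipschitzWith 1 f →
    ∃ g : A → X, LipschitzWith 1 g ∧ ∀ b : B, g b = f b

/-- A metric space is Lipschitz connected if any two points are joined by a Lipschitz
path `f : [0,1] → X`. -/
def LipschitzConnected (X : Type*) [MetricSpace X] : Prop :=
  ∀ x y : X, ∃ f : Set.Icc (0:ℝ) 1 → X, (∃ K : NNReal, LipschitzWith K f) ∧
    f ⟨0, by norm_num⟩ = x ∧ f ⟨1, by norm_num⟩ = y

/-- The intrinsic metric: the infimum of Lipschitz constants of paths joining `x` and `y`. -/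
noncomputable def intrinsicDist {X : Type*} [MetricSpace X] (x y : X) : ℝ :=
  sInf {K : ℝ | 0 ≤ K ∧ ∃ f : Set.Icc (0:ℝ) 1 → X,
    LipschitzWith K.toNNReal f ∧ f ⟨0, by norm_num⟩ = x ∧ f ⟨1, by norm_num⟩ = y}

/-- A metric space is analytic if it is a continuous image of a complete separable
metric space. -/
def IsAnalyticMetricSpace (X : Type*) [MetricSpace X] : Prop :=
  ∃ (Z : Type) (_ : MetricSpace Z) (_ : CompleteSpace Z)
    (_ : TopologicalSpace.SeparableSpace Z) (g : Z → X),
      Continuous g ∧ Function.Surjective g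

/-- `L`-Lipschitz connectedness: any two points `x,y` are joined by an `L`-Lipschitz
path defined on `[0, d(x,y)]`. -/
def LLipschitzConnected (L : NNReal) (Y : Type*) [MetricSpace Y] : Prop :=
  ∀ x y : Y, ∃ f : Set.Icc (0:ℝ) (dist x y) → Y, LipschitzWith L f ∧
    f ⟨0, ⟨le_refl 0, dist_nonneg⟩⟩ = x ∧ f ⟨dist x y, ⟨dist_nonneg, le_refl _⟩⟩ = y

/-- Hyperconvexity: every family of closed balls with `d(xᵢ,xⱼ) ≤ rᵢ + rⱼ` has a
common point. -/
def Hyperconvex (X : Type*) [MetricSpace X] : Prop :=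
  ∀ (I : Type) (x : I → X) (r : I → ℝ), (∀ i, 0 ≤ r i) →
    (∀ i j, dist (x i) (x j) ≤ r i + r j) →
    (⋂ i, Metric.closedBall (x i) (r i)).Nonempty

/-- Metric convexity. -/
def MetricallyConvex (X : Type*) [MetricSpace X] : Prop :=
  ∀ a b : X, ∀ t : ℝ, t ∈ Set.Icc (0:ℝ) 1 →
    ∃ x : X, dist a x = t * dist a b ∧ dist x b = (1 - t) * dist a b

/-- Binary intersection property: every family of pairwise intersecting closed balls
has a common point. -/
def BinaryIntersectionProperty (X : Type*) [MetricSpace X] : Prop :=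
  ∀ (I : Type) (x : I → X) (r : I → ℝ),
    (∀ i j, (Metric.closedBall (x i) (r i) ∩ Metric.closedBall (x j) (r j)).Nonempty) →
    (⋂ i, Metric.closedBall (x i) (r i)).Nonempty


/-!
Points of an ℝ-convex segment `[x,y]` are linearly ordered by their distance to `x`:
`d(p,q) = |d(x,p) - d(x,q)|`, so a point `p` of `[x,y]` with `d(x,p) ≤ d(x,u)` lies in `[x,u]`.
The intersection `[x,y] ∩ [x,z]` is compact (it is closed in the compact `[x,y]`), so `d(x,·)`
attains its maximum on it at some `u`, and then `[x,y] ∩ [x,z] = [x,u]`. Uniqueness holds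
because `u ∈ [x,v]` and `v ∈ [x,u]` force `u = v`.
-/

section MetricSegment

variable {X : Type*} [MetricSpace X]

lemma left_mem_metricSegment (x y : X) : x ∈ MetricSegment x y := by
  simp [MetricSegment]

lemma right_mem_metricSegment (x y : X) : y ∈ MetricSegment x y := by
  simp [MetricSegment]

lemma isClosed_metricSegment (x y : X) : IsClosed (MetricSegment x y) :=
  isClosed_eq (by fun_prop) (by fun_prop)

lemma metricSegment_subset_of_mem {x y u : X} (hu : u ∈ MetricSegment x y) :
    MetricSegment x u ⊆ MetricSegment x y := by
  intro p hp
  simp only [MetricSegment, Set.mem_ofPred_eq] at *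
  linarith [dist_triangle x p y, dist_triangle p u y]

lemma eq_of_mem_metricSegment_of_mem_metricSegment {x u v : X}
    (hu : u ∈ MetricSegment x v) (hv : v ∈ MetricSegment x u) : u = v := by
  simp only [MetricSegment, Set.mem_ofPred_eq] at hu hv
  rw [← dist_eq_zero]
  linarith [dist_comm u v, dist_nonneg (x := u) (y := v)]

end MetricSegment

lemma eq_zero_or_eq_of_abs_sub_eq {a b L : ℝ} (ha : a ∈ Set.Icc 0 L) (hb : b ∈ Set.Icc 0 L)
    (hab : |a - b| = L) : a = 0 ∨ a = L := by
  rcases abs_cases (a - b) with ⟨h, -⟩ | ⟨h, -⟩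
  · right; linarith [ha.2, hb.1]
  · left; linarith [ha.1, hb.2]

section RConvexSegment

variable {X : Type*} [MetricSpace X] {x y : X}

lemma isCompact_metricSegment_of_isometryEquiv
    (e : MetricSegment x y ≃ᵢ Set.Icc (0 : ℝ) (dist x y)) : IsCompact (MetricSegment x y) := by
  rw [isCompact_iff_compactSpace]
  have : CompactSpace (Set.Icc (0 : ℝ) (dist x y)) := isCompact_iff_compactSpace.mp isCompact_Icc
  exact e.symm.toHomeomorph.compactSpace

lemma dist_eq_abs_sub_of_mem_metricSegment
    (e : MetricSegment x y ≃ᵢ Set.Icc (0 : ℝ) (dist x y))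
    {p q : X} (hp : p ∈ MetricSegment x y) (hq : q ∈ MetricSegment x y) :
    dist p q = |dist x p - dist x q| := by
  have he (a b : MetricSegment x y) : |(e a : ℝ) - e b| = dist (a : X) b := by
    rw [← Real.dist_eq, ← Subtype.dist_eq, e.dist_eq, Subtype.dist_eq]
  let x' : MetricSegment x y := ⟨x, left_mem_metricSegment x y⟩
  let y' : MetricSegment x y := ⟨y, right_mem_metricSegment x y⟩
  let p' : MetricSegment x y := ⟨p, hp⟩
  let q' : MetricSegment x y := ⟨q, hq⟩
  rw [← he p' q', ← he x' p', ← he x' q']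
  -- `x` is sent to an endpoint of `[0, d(x,y)]`, so `d(x,·)` is `e` or `d(x,y) - e` on `[x,y]`.
  rcases eq_zero_or_eq_of_abs_sub_eq (e x').2 (e y').2 (he x' y') with h0 | hL
  · rw [h0, zero_sub, zero_sub, abs_neg, abs_neg, abs_of_nonneg (e p').2.1,
      abs_of_nonneg (e q').2.1]
  · rw [hL, abs_of_nonneg (sub_nonneg.2 (e p').2.2), abs_of_nonneg (sub_nonneg.2 (e q').2.2),
      sub_sub_sub_cancel_left, abs_sub_comm]

lemma mem_metricSegment_of_dist_le (e : MetricSegment x y ≃ᵢ Set.Icc (0 : ℝ) (dist x y))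
    {p u : X} (hp : p ∈ MetricSegment x y) (hu : u ∈ MetricSegment x y)
    (hpu : dist x p ≤ dist x u) : p ∈ MetricSegment x u := by
  have hd := dist_eq_abs_sub_of_mem_metricSegment e hp hu
  rw [abs_of_nonpos (sub_nonpos.2 hpu)] at hd
  simp only [MetricSegment, Set.mem_ofPred_eq]
  linarith

end RConvexSegment

/-- In an ℝ-convex metric space, the intersection `[x,y] ∩ [x,z]` of two metric
segments equals `[x,u]` for a unique point `u` of this intersection. -/
theorem rconvex_segment_intersection (X : Type) [MetricSpace X]
    (h : ∀ x z : X, Nonempty ((MetricSegment x z) ≃ᵢ (Set.Icc (0:ℝ) (dist x z)))) :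
    ∀ x y z : X, ∃! u : X, u ∈ MetricSegment x y ∩ MetricSegment x z ∧
      MetricSegment x y ∩ MetricSegment x z = MetricSegment x u := by
  intro x y z
  obtain ⟨e⟩ := h x y
  set S := MetricSegment x y ∩ MetricSegment x z
  have hxS : x ∈ S := ⟨left_mem_metricSegment x y, left_mem_metricSegment x z⟩
  have hS : IsCompact S :=
    (isCompact_metricSegment_of_isometryEquiv e).inter_right (isClosed_metricSegment x z)
  obtain ⟨u, huS, hmax⟩ :=
    hS.exists_isMaxOn ⟨x, hxS⟩ (continuous_const.dist continuous_id).continuousOn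
  have hSu : S = MetricSegment x u := by
    refine Set.Subset.antisymm (fun p hp => ?_) (Set.subset_inter ?_ ?_)
    · exact mem_metricSegment_of_dist_le e hp.1 huS.1 (hmax hp)
    · exact metricSegment_subset_of_mem huS.1
    · exact metricSegment_subset_of_mem huS.2
  refine ⟨u, ⟨huS, hSu⟩, fun v ⟨hvS, hSv⟩ => ?_⟩
  exact (eq_of_mem_metricSegment_of_mem_metricSegment (hSv ▸ huS) (hSu ▸ hvS)).symm
end

section
/- Let X be a Lipschitz connected metric space with intrinsic metric d_IX. If the metric d_X is complete, then d_IX is complete: every sequence in X that is Cauchy with respect to d_IX converges with respect to d_IX to some point of X. -/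
/-!
Since `dist ≤ intrinsicDist`, an intrinsically Cauchy sequence `u` converges to some `p` in the
complete metric `dist`. Given `n` large, pass to a subsequence starting at `u n` whose consecutive
intrinsic distances are below `ε/2 · 2⁻ᵏ⁻¹`, join consecutive terms by paths, and run the `k`-th
path on `[1 - 2⁻ᵏ, 1 - 2⁻ᵏ⁻¹]`. The concatenation is `ε/2`-Lipschitz on `[0, 1)`, so it extends
to `1` by `p`, whence `intrinsicDist (u n) p ≤ ε/2`.
-/

open Set Filter Topology
open scoped NNReal

theorem LipschitzWith.of_tendsto {ι α β : Type*} [PseudoEMetricSpace α] [PseudoEMetricSpace β]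
    {l : Filter ι} [l.NeBot] {K : ℝ≥0} {F : ι → α → β} {g : α → β}
    (hF : ∀ᶠ i in l, LipschitzWith K (F i)) (hg : ∀ x, Tendsto (fun i => F i x) l (𝓝 (g x))) :
    LipschitzWith K g := fun x y =>
  le_of_tendsto ((hg x).edist (hg y)) (hF.mono fun _ hi => hi x y)

theorem LipschitzWith.ite_le {X : Type*} [PseudoMetricSpace X] {K : ℝ≥0} {f g : ℝ → X}
    (hf : LipschitzWith K f) (hg : LipschitzWith K g) {c : ℝ} (hc : f c = g c) :
    LipschitzWith K fun t => if t ≤ c then f t else g t := by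
  have across : ∀ s t, s ≤ c → c < t → dist (f s) (g t) ≤ K * dist s t := fun s t hs ht =>
    calc dist (f s) (g t) ≤ dist (f s) (f c) + dist (g c) (g t) := hc ▸ dist_triangle _ _ _
      _ ≤ K * dist s c + K * dist c t := add_le_add (hf.dist_le_mul _ _) (hg.dist_le_mul _ _)
      _ = K * dist s t := by
        rw [Real.dist_eq, Real.dist_eq, Real.dist_eq, abs_of_nonpos (by linarith),
          abs_of_neg (by linarith), abs_of_neg (by linarith)]
        ring
  refine LipschitzWith.of_dist_le_mul fun s t => ?_
  by_cases hs : s ≤ c <;> by_cases ht : t ≤ c <;> simp only [hs, ht, if_true, if_false]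
  · exact hf.dist_le_mul s t
  · exact across s t hs (not_le.1 ht)
  · rw [dist_comm, dist_comm s]
    exact across t s ht (not_le.1 hs)
  · exact hg.dist_le_mul s t

theorem exists_strictMono_zero_eq_forall_le (N : ℕ → ℕ) {n : ℕ} (hn : N 0 ≤ n) :
    ∃ M : ℕ → ℕ, StrictMono M ∧ M 0 = n ∧ ∀ k, N k ≤ M k := by
  refine ⟨fun k => Nat.rec n (fun k m => max (m + 1) (N (k + 1))) k,
    strictMono_nat_of_lt_succ fun k => (Nat.lt_succ_self _).trans_le (le_max_left _ _), rfl, ?_⟩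
  rintro (_ | k)
  exacts [hn, le_max_right _ _]

section Concatenation

variable {X : Type*}

noncomputable def stretchPath (f : Icc (0:ℝ) 1 → X) (a b : ℝ) : ℝ → X :=
  fun t => IccExtend zero_le_one f ((t - a) / (b - a))

theorem stretchPath_left (f : Icc (0:ℝ) 1 → X) (a b : ℝ) :
    stretchPath f a b a = f ⟨0, by norm_num⟩ := by
  simp [stretchPath, IccExtend_left]

theorem stretchPath_of_le {f : Icc (0:ℝ) 1 → X} {a b t : ℝ} (hab : a < b) (ht : b ≤ t) :
    stretchPath f a b t = f ⟨1, by norm_num⟩ :=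
  IccExtend_of_right_le zero_le_one f <| (one_le_div (sub_pos.2 hab)).2 (sub_le_sub_right ht a)

theorem lipschitzWith_stretchPath [PseudoMetricSpace X] {f : Icc (0:ℝ) 1 → X} {K : ℝ≥0}
    {a b : ℝ} (hab : a < b) (hf : LipschitzWith (K * (b - a)).toNNReal f) :
    LipschitzWith K (stretchPath f a b) := by
  have hba : 0 < b - a := sub_pos.2 hab
  refine LipschitzWith.of_dist_le_mul fun s t => ?_
  calc dist (stretchPath f a b s) (stretchPath f a b t)
      ≤ (K * (b - a)).toNNReal * dist ((s - a) / (b - a)) ((t - a) / (b - a)) := by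
        have := (hf.comp (LipschitzWith.projIcc zero_le_one)).dist_le_mul
          ((s - a) / (b - a)) ((t - a) / (b - a))
        rwa [mul_one] at this
    _ = K * dist s t := by
        rw [Real.coe_toNNReal _ (by positivity), Real.dist_eq, Real.dist_eq, ← sub_div,
          sub_sub_sub_cancel_right, abs_div, abs_of_pos hba]
        field_simp

noncomputable def gluePieces (P : ℕ → ℝ → X) (a : ℕ → ℝ) (x₀ : X) : ℕ → ℝ → X
  | 0, _ => x₀
  | m + 1, t => if t ≤ a m then gluePieces P a x₀ m t else P m t

variable {P : ℕ → ℝ → X} {a : ℕ → ℝ} {v : ℕ → X}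

theorem gluePieces_eq_of_le (ha : Monotone a) {t : ℝ} {N : ℕ} (ht : t ≤ a N) {m : ℕ}
    (hm : N ≤ m) : gluePieces P a (v 0) m t = gluePieces P a (v 0) N t := by
  induction m, hm using Nat.le_induction with
  | base => rfl
  | succ m hNm ih => rw [gluePieces, if_pos (ht.trans (ha hNm)), ih]

theorem gluePieces_eq_of_ge (ha : StrictMono a) (hPr : ∀ m t, a (m + 1) ≤ t → P m t = v (m + 1))
    {m : ℕ} {t : ℝ} (ht : a m ≤ t) : gluePieces P a (v 0) m t = v m := by
  induction m with
  | zero => rfl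
  | succ m _ => rw [gluePieces, if_neg (not_le.2 ((ha m.lt_succ_self).trans_le ht)), hPr m t ht]

theorem lipschitzWith_gluePieces [PseudoMetricSpace X] {K : ℝ≥0} (ha : StrictMono a)
    (hP : ∀ m, LipschitzWith K (P m)) (hPl : ∀ m, P m (a m) = v m)
    (hPr : ∀ m t, a (m + 1) ≤ t → P m t = v (m + 1)) (m : ℕ) :
    LipschitzWith K (gluePieces P a (v 0) m) := by
  induction m with
  | zero => exact LipschitzWith.const' (v 0)
  | succ m ih =>
    exact ih.ite_le (hP m) ((gluePieces_eq_of_ge ha hPr le_rfl).trans (hPl m).symm)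

theorem exists_lipschitzWith_of_pieces [MetricSpace X] {K : ℝ≥0} {b : ℝ} {p : X}
    (ha : StrictMono a) (hab : Tendsto a atTop (𝓝 b)) (hv : Tendsto v atTop (𝓝 p))
    (hP : ∀ m, LipschitzWith K (P m)) (hPl : ∀ m, P m (a m) = v m)
    (hPr : ∀ m t, a (m + 1) ≤ t → P m t = v (m + 1)) :
    ∃ g : ℝ → X, LipschitzWith K g ∧ g (a 0) = v 0 ∧ g b = p := by
  have hright : ∀ t, b ≤ t → Tendsto (fun m => gluePieces P a (v 0) m t) atTop (𝓝 p) :=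
    fun t ht => hv.congr fun m =>
      (gluePieces_eq_of_ge ha hPr ((ha.monotone.ge_of_tendsto hab m).trans ht)).symm
  have hconv : ∀ t, ∃ y, Tendsto (fun m => gluePieces P a (v 0) m t) atTop (𝓝 y) := by
    intro t
    rcases lt_or_ge t b with ht | ht
    · obtain ⟨N, hN⟩ := (hab.eventually (eventually_gt_nhds ht)).exists
      exact ⟨_, tendsto_atTop_of_eventually_const fun m => gluePieces_eq_of_le ha.monotone hN.le⟩
    · exact ⟨p, hright t ht⟩
  choose g hg using hconv
  refine ⟨g, ?_, ?_, tendsto_nhds_unique (hg b) (hright b le_rfl)⟩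
  · exact .of_tendsto (.of_forall (lipschitzWith_gluePieces ha hP hPl hPr)) hg
  · exact tendsto_nhds_unique (hg _)
      (tendsto_atTop_of_eventually_const fun m => gluePieces_eq_of_le ha.monotone le_rfl)

end Concatenation

section IntrinsicDist

variable {X : Type*} [MetricSpace X]

theorem intrinsicDist_nonneg (x y : X) : 0 ≤ intrinsicDist x y :=
  Real.sInf_nonneg fun _ hK => hK.1

theorem intrinsicDist_le_of_lipschitzWith {g : ℝ → X} {K : ℝ≥0} (hg : LipschitzWith K g) :
    intrinsicDist (g 0) (g 1) ≤ K := by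
  unfold intrinsicDist
  refine csInf_le ⟨0, fun _ hK => hK.1⟩ ?_
  exact ⟨K.coe_nonneg, g ∘ Subtype.val, by simpa using hg.comp (LipschitzWith.subtype_val _),
    rfl, rfl⟩

theorem LipschitzConnected.exists_lipschitzWith_of_intrinsicDist_lt (h : LipschitzConnected X)
    {x y : X} {c : ℝ} (hc : intrinsicDist x y < c) :
    ∃ f : Icc (0:ℝ) 1 → X, LipschitzWith c.toNNReal f ∧
      f ⟨0, by norm_num⟩ = x ∧ f ⟨1, by norm_num⟩ = y := by
  obtain ⟨f, ⟨K, hK⟩, hf0, hf1⟩ := h x y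
  have hlt := fun hne => exists_lt_of_csInf_lt hne hc
  obtain ⟨K', ⟨-, f', hf', hf0', hf1'⟩, hK'c⟩ :=
    hlt ⟨K, K.coe_nonneg, f, by simpa using hK, hf0, hf1⟩
  exact ⟨f', hf'.weaken (Real.toNNReal_le_toNNReal hK'c.le), hf0', hf1'⟩

theorem LipschitzConnected.dist_le_intrinsicDist (h : LipschitzConnected X) (x y : X) :
    dist x y ≤ intrinsicDist x y := by
  refine le_of_forall_gt_imp_ge_of_dense fun c hc => ?_
  obtain ⟨f, hf, rfl, rfl⟩ := h.exists_lipschitzWith_of_intrinsicDist_lt hc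
  have hc0 : 0 ≤ c := (intrinsicDist_nonneg _ _).trans hc.le
  simpa [Real.coe_toNNReal _ hc0, Subtype.dist_eq, Real.dist_eq] using
    hf.dist_le_mul ⟨0, by norm_num⟩ ⟨1, by norm_num⟩

theorem LipschitzConnected.intrinsicDist_le_of_tendsto (h : LipschitzConnected X) {v : ℕ → X}
    {p : X} (hv : Tendsto v atTop (𝓝 p)) {K : ℝ≥0} {a : ℕ → ℝ} (ha : StrictMono a)
    (ha0 : a 0 = 0) (ha1 : Tendsto a atTop (𝓝 1))
    (hstep : ∀ m, intrinsicDist (v m) (v (m + 1)) < K * (a (m + 1) - a m)) :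
    intrinsicDist (v 0) p ≤ K := by
  choose f hf hf0 hf1 using fun m => h.exists_lipschitzWith_of_intrinsicDist_lt (hstep m)
  obtain ⟨g, hg, hg0, hg1⟩ := exists_lipschitzWith_of_pieces
    (P := fun m => stretchPath (f m) (a m) (a (m + 1))) ha ha1 hv
    (fun m => lipschitzWith_stretchPath (ha m.lt_succ_self) (hf m))
    (fun m => (stretchPath_left _ _ _).trans (hf0 m))
    (fun m _ ht => (stretchPath_of_le (ha m.lt_succ_self) ht).trans (hf1 m))
  rw [ha0] at hg0
  simpa [hg0, hg1] using intrinsicDist_le_of_lipschitzWith hg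

end IntrinsicDist

/-- If a Lipschitz connected metric space is complete, then its intrinsic metric is
complete: every sequence Cauchy with respect to the intrinsic metric converges with
respect to the intrinsic metric. -/
theorem intrinsic_complete_of_complete (X : Type) [MetricSpace X] [CompleteSpace X]
    (h : LipschitzConnected X) (u : ℕ → X)
    (hcauchy : ∀ ε : ℝ, 0 < ε → ∃ N : ℕ, ∀ n ≥ N, ∀ m ≥ N, intrinsicDist (u n) (u m) < ε) :
    ∃ p : X, ∀ ε : ℝ, 0 < ε → ∃ N : ℕ, ∀ n ≥ N, intrinsicDist (u n) p < ε := by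
  have hu : CauchySeq u := Metric.cauchySeq_iff.2 fun ε hε => (hcauchy ε hε).imp
    fun _ hN m hm n hn => (h.dist_le_intrinsicDist _ _).trans_lt (hN m hm n hn)
  obtain ⟨p, hp⟩ := cauchySeq_tendsto_of_complete hu
  refine ⟨p, fun ε hε => ?_⟩
  set a : ℕ → ℝ := fun k => 1 - 2⁻¹ ^ k
  have ha : StrictMono a := strictMono_nat_of_lt_succ fun k =>
    sub_lt_sub_left (pow_lt_pow_right_of_lt_one₀ (by norm_num) (by norm_num) k.lt_succ_self) 1
  have ha1 : Tendsto a atTop (𝓝 1) := by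
    simpa [a] using (tendsto_pow_atTop_nhds_zero_of_lt_one (by norm_num : (0:ℝ) ≤ 2⁻¹)
      (by norm_num)).const_sub 1
  choose N hN using fun k =>
    hcauchy (ε / 2 * (a (k + 1) - a k)) (mul_pos (half_pos hε) (sub_pos.2 (ha k.lt_succ_self)))
  refine ⟨N 0, fun n hn => ?_⟩
  obtain ⟨M, hM, hM0, hNM⟩ := exists_strictMono_zero_eq_forall_le N hn
  have hle := h.intrinsicDist_le_of_tendsto (hp.comp hM.tendsto_atTop)
    (K := ⟨ε / 2, by positivity⟩) ha (by simp [a]) ha1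
    fun k => hN k _ (hNM k) _ ((hNM k).trans (hM k.lt_succ_self).le)
  rw [Function.comp_apply, hM0] at hle
  exact hle.trans_lt (half_lt_self hε)
end
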